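/- arXiv:math/9606205 — 2 statements merged into one kernel-verified Lean document; each statement's English description precedes it below -/
import Mathlib

section
/- Suppose the sequence ⟨wₙ⟩ is dense, i.e., for every s ∈ 2^{<ω} there is n with s ⊆ wₙ. If X ⊆ 2^ω has the Baire property and is non-meager, then X is not G₀-discrete; i.e., there exist x, y ∈ X with x G₀ y. -/
/-- The witness condition at index `n` for the graph `G₀` determined by the
sequence `w` (where `w n` codes the tuple `wₙ ∈ 2ⁿ` on coordinates `< n`). -/
def G0Witness (w : ℕ → ℕ → Bool) (n : ℕ) (x y : ℕ → Bool) : Prop :=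
  (∀ k, k < n → x k = w n k ∧ y k = w n k) ∧ x n = !(y n) ∧ ∀ k, n < k → x k = y k

/-- The graph `G₀` on Cantor space `2^ω`. -/
def G0 (w : ℕ → ℕ → Bool) (x y : ℕ → Bool) : Prop :=
  ∃ n, G0Witness w n x y

/-- Flipping the `n`-th coordinate, as a self-homeomorphism of Cantor space. -/
def flipHomeo (n : ℕ) : Homeomorph (ℕ → Bool) (ℕ → Bool) where
  toFun x := fun k => if k = n then !(x n) else x k
  invFun x := fun k => if k = n then !(x n) else x k
  left_inv x := by funext k; by_cases h : k = n <;> simp [h]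
  right_inv x := by funext k; by_cases h : k = n <;> simp [h]
  continuous_toFun := by
    refine continuous_pi fun k => ?_
    by_cases h : k = n
    · simp only [h, if_pos rfl]
      exact Continuous.comp (continuous_of_discreteTopology (f := Bool.not)) (continuous_apply n)
    · simp only [if_neg h]; exact continuous_apply k
  continuous_invFun := by
    refine continuous_pi fun k => ?_
    by_cases h : k = n
    · simp only [h, if_pos rfl]
      exact Continuous.comp (continuous_of_discreteTopology (f := Bool.not)) (continuous_apply n)
    · simp only [if_neg h]; exact continuous_apply k

/-- If the sequence `⟨wₙ⟩` is dense, every non-meager set with the Baire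
property contains an edge of `G₀`. -/
theorem nonmeager_not_G0_discrete (w : ℕ → ℕ → Bool)
    (hdense : ∀ (m : ℕ) (s : ℕ → Bool), ∃ n, m ≤ n ∧ ∀ k, k < m → s k = w n k)
    (X : Set (ℕ → Bool)) (hX : BaireMeasurableSet X) (hnm : ¬ IsMeagre X) :
    ∃ x ∈ X, ∃ y ∈ X, G0 w x y := by
  obtain ⟨U, hUo, hXU⟩ := hX.residualEq_isOpen
  have hR : {x | x ∈ X ↔ x ∈ U} ∈ residual (ℕ → Bool) := by
    filter_upwards [hXU] with x hx
    exact Iff.of_eq hx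
  -- U is nonempty
  obtain ⟨x₀, hx₀⟩ : U.Nonempty := by
    by_contra hne
    rw [Set.not_nonempty_iff_eq_empty] at hne
    refine hnm (Filter.mem_of_superset hR ?_)
    intro x hx hxX
    have := hx.mp hxX
    rw [hne] at this
    exact this
  -- find a basic cylinder inside U
  obtain ⟨I, u, hu, hIU⟩ := isOpen_pi_iff.mp hUo x₀ hx₀
  set m := I.sup id + 1 with hm
  obtain ⟨n, hmn, hwn⟩ := hdense m x₀
  -- the cylinder determined by w n
  set C : Set (ℕ → Bool) := {x | ∀ k, k < n → x k = w n k} with hC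
  have hCU : C ⊆ U := by
    intro x hx
    apply hIU
    intro i hi
    have him : i < m := Nat.lt_succ_of_le (Finset.le_sup (f := id) hi)
    have : x i = x₀ i := by
      rw [hx i (lt_of_lt_of_le him hmn), ← hwn i him]
    rw [this]
    exact (hu i hi).2
  have hCopen : IsOpen C := by
    have : C = ⋂ k ∈ Finset.range n, (fun x : ℕ → Bool => x k) ⁻¹' {w n k} := by
      ext x
      simp [hC, Set.mem_iInter]
    rw [this]
    exact isOpen_biInter_finset fun k _ => (continuous_apply k).isOpen_preimage _
      (isOpen_discrete _)
  have hCne : C.Nonempty := ⟨w n, fun k _ => rfl⟩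
  -- the flip homeomorphism at n
  set H := flipHomeo n with hH
  have hS : {x | x ∈ X ↔ x ∈ U} ∩ H ⁻¹' {x | x ∈ X ↔ x ∈ U} ∈ residual (ℕ → Bool) := by
    refine Filter.inter_mem hR ?_
    exact tendsto_residual_of_isOpenMap H.continuous H.isOpenMap hR
  obtain ⟨x, hxC, hxS⟩ :=
    (dense_of_mem_residual hS).inter_open_nonempty C hCopen hCne
  have hxU : x ∈ U := hCU hxC
  have hxX : x ∈ X := hxS.1.mpr hxU
  -- y := H x
  have hHxC : H x ∈ C := by
    intro k hk
    have : (H x) k = x k := if_neg (Nat.ne_of_lt hk)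
    rw [this]; exact hxC k hk
  have hyX : H x ∈ X := hxS.2.mpr (hCU hHxC)
  refine ⟨x, hxX, H x, hyX, n, ?_, ?_, ?_⟩
  · exact fun k hk => ⟨hxC k hk, hHxC k hk⟩
  · have : (H x) n = !(x n) := if_pos rfl
    rw [this, Bool.not_not]
  · intro k hk
    exact (if_neg (Nat.ne_of_gt hk)).symm
end

section
/- For each m ∈ ω, the directed graph of crucial pairs on 2^m forms a tree: any two distinct u, v ∈ 2^m are connected by a unique non-self-intersecting chain of crucial pairs. -/
/-- `⟨u,v⟩` is a crucial pair in `2^m` (for the fixed sequence `w`, where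
`w k` codes the tuple `wₖ ∈ 2ᵏ` on coordinates `< k`): `u = wₖ⌢0⌢t` and
`v = wₖ⌢1⌢t` for some `k < m` and `t ∈ 2^{m-k-1}`. -/
def Crucial (w : ℕ → ℕ → Bool) (m : ℕ) (u v : Fin m → Bool) : Prop :=
  ∃ k : Fin m,
    (∀ i : Fin m, (i : ℕ) < (k : ℕ) → u i = w k i ∧ v i = w k i) ∧
    u k = false ∧ v k = true ∧
    ∀ i : Fin m, (k : ℕ) < (i : ℕ) → u i = v i

/-- `Crucial` with a fixed index `k`. -/
def CrucialAt (w : ℕ → ℕ → Bool) (m : ℕ) (k : Fin m) (u v : Fin m → Bool) : Prop :=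
  (∀ i : Fin m, (i : ℕ) < (k : ℕ) → u i = w k i ∧ v i = w k i) ∧
    u k = false ∧ v k = true ∧
    ∀ i : Fin m, (k : ℕ) < (i : ℕ) → u i = v i

lemma crucial_iff (w : ℕ → ℕ → Bool) (m : ℕ) (u v : Fin m → Bool) :
    Crucial w m u v ↔ ∃ k : Fin m, CrucialAt w m k u v := Iff.rfl

/-- Vertices connected once they agree above a threshold. -/
lemma reach_aux (w : ℕ → ℕ → Bool) (m : ℕ) :
    ∀ n : ℕ, n ≤ m → ∀ u v : Fin m → Bool,
      (∀ i : Fin m, n ≤ (i : ℕ) → u i = v i) →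
      (SimpleGraph.fromRel (Crucial w m)).Reachable u v := by
  intro n
  induction n with
  | zero =>
    intro _ u v h
    have : u = v := funext fun i => h i (Nat.zero_le _)
    rw [this]
  | succ n ih =>
    intro hn u v h
    have hnm : n < m := hn
    set k : Fin m := ⟨n, hnm⟩ with hkdef
    have key : ∀ u v : Fin m → Bool, u k = false → v k = true →
        (∀ i : Fin m, n + 1 ≤ (i : ℕ) → u i = v i) →
        (SimpleGraph.fromRel (Crucial w m)).Reachable u v := by
      intro u v hu hv huv
      set u' : Fin m → Bool := fun i => if (i : ℕ) < n then w k i else u i with hu'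
      set v' : Fin m → Bool := fun i => if (i : ℕ) < n then w k i else v i with hv'
      have hu'k : u' k = false := by simp [hu', hu, show ¬ ((k:ℕ) < n) from lt_irrefl n]
      have hv'k : v' k = true := by simp [hv', hv, show ¬ ((k:ℕ) < n) from lt_irrefl n]
      have r1 : (SimpleGraph.fromRel (Crucial w m)).Reachable u u' := by
        apply ih (le_of_lt hnm) u u'
        intro i hi
        simp [hu', Nat.not_lt.mpr hi]
      have r2 : (SimpleGraph.fromRel (Crucial w m)).Reachable v' v := by
        apply (ih (le_of_lt hnm) v v' ?_).symm
        intro i hi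
        simp [hv', Nat.not_lt.mpr hi]
      have hadj : (SimpleGraph.fromRel (Crucial w m)).Adj u' v' := by
        rw [SimpleGraph.fromRel_adj]
        constructor
        · intro hEq
          rw [hEq, hv'k] at hu'k
          exact Bool.true_eq_false.mp hu'k
        · left
          refine ⟨k, ?_, hu'k, hv'k, ?_⟩
          · intro i hi
            constructor <;> simp [hu', hv', show (i:ℕ) < n from hi]
          · intro i hi
            have hkn : (k : ℕ) = n := rfl
            have hi' : ¬ ((i : ℕ) < n) := by omega
            have : n + 1 ≤ (i : ℕ) := hi
            simp [hu', hv', hi', huv i this]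
      exact r1.trans (hadj.reachable.trans r2)
    by_cases hk : u k = v k
    · apply ih (le_of_lt hnm) u v
      intro i hi
      rcases Nat.eq_or_lt_of_le hi with heq | hlt
      · have : i = k := Fin.ext heq.symm
        rw [this, hk]
      · exact h i hlt
    · cases hu : u k
      · cases hv : v k
        · rw [hu, hv] at hk; exact absurd rfl hk
        · exact key u v hu hv (fun i hi => h i hi)
      · cases hv : v k
        · exact (key v u hv hu (fun i hi => (h i hi).symm)).symm
        · rw [hu, hv] at hk; exact absurd rfl hk

/-- Values of a function are constant along a walk whose edges preserve it. -/
lemma walk_support_const {V : Type*} {G : SimpleGraph V} {β : Type*} (f : V → β) :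
    ∀ {a b : V} (q : G.Walk a b), (∀ x y : V, s(x, y) ∈ q.edges → f x = f y) →
      ∀ c ∈ q.support, f c = f a := by
  intro a b q
  induction q with
  | nil =>
    intro _ c hc
    simp only [SimpleGraph.Walk.support_nil, List.mem_singleton] at hc
    rw [hc]
  | @cons a d b h q' ih =>
    intro hf c hc
    rw [SimpleGraph.Walk.support_cons] at hc
    rcases List.mem_cons.mp hc with rfl | hc
    · rfl
    · have h1 : f c = f d :=
        ih (fun x y hxy => hf x y (by rw [SimpleGraph.Walk.edges_cons]; exact List.mem_cons_of_mem _ hxy)) c hc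
      have h2 : f a = f d := hf a d (by rw [SimpleGraph.Walk.edges_cons]; exact List.mem_cons_self)
      rw [h1, h2]

/-- Parity of occurrences of a distinguished edge along a walk all of whose
other edges preserve `f`. -/
lemma walk_count_parity {V : Type*} [DecidableEq V] {G : SimpleGraph V}
    (f : V → Bool) (e₀ : Sym2 V)
    (hne : ∀ x y : V, s(x, y) = e₀ → f x ≠ f y) :
    ∀ {a b : V} (q : G.Walk a b),
      (∀ x y : V, s(x, y) ∈ q.edges → s(x, y) = e₀ ∨ f x = f y) →
      (f a = f b ↔ Even (q.edges.count e₀)) := by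
  intro a b q
  induction q with
  | nil => simp
  | @cons a d b h q' ih =>
    intro hyp
    have hmem : s(a, d) ∈ (SimpleGraph.Walk.cons h q').edges := by
      rw [SimpleGraph.Walk.edges_cons]; exact List.mem_cons_self
    have htail : ∀ x y : V, s(x, y) ∈ q'.edges → s(x, y) = e₀ ∨ f x = f y := by
      intro x y hxy
      exact hyp x y (by rw [SimpleGraph.Walk.edges_cons]; exact List.mem_cons_of_mem _ hxy)
    have ih' := ih htail
    rw [SimpleGraph.Walk.edges_cons]
    by_cases hcase : s(a, d) = e₀
    · have hfa : f a ≠ f d := hne a d hcase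
      have hc1 : List.count e₀ (s(a, d) :: q'.edges) = List.count e₀ q'.edges + 1 := by
        simp [hcase]
      rw [hc1, Nat.even_add_one, ← ih']
      constructor
      · intro hab hdb
        rw [← hdb] at hab
        exact hfa hab
      · intro hdb
        cases hfa' : f a <;> cases hfd : f d <;> cases hfb : f b <;>
          simp_all
    · have hfa : f a = f d := by
        rcases hyp a d hmem with h1 | h1
        · exact absurd h1 hcase
        · exact h1
      have hc1 : List.count e₀ (s(a, d) :: q'.edges) = List.count e₀ q'.edges :=
        List.count_cons_of_ne hcase
      rw [hc1, ← ih', hfa]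

/-- The graph of crucial pairs on `2^m` is a tree: connected and acyclic,
i.e. any two vertices are joined by a unique simple path. -/
theorem crucialGraph_isTree (w : ℕ → ℕ → Bool) (m : ℕ) :
    (SimpleGraph.fromRel (Crucial w m)).IsTree := by
  classical
  set G := SimpleGraph.fromRel (Crucial w m) with hG
  constructor
  · -- connected
    refine ⟨fun u v => ?_⟩
    apply reach_aux w m m le_rfl u v
    intro i hi
    exact absurd i.2 (Nat.not_lt.mpr hi)
  · -- acyclic
    intro a p hp
    -- edges of the cycle are nonempty
    have hlen : 3 ≤ p.length := hp.three_le_length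
    have hedlen : p.edges.length = p.length := SimpleGraph.Walk.length_edges p
    have hLne : p.edges ≠ [] := by
      intro h
      rw [h] at hedlen
      simp at hedlen
      omega
    -- every edge of the cycle is crucial at some index; collect those indices
    have edge_idx : ∀ x y : Fin m → Bool, s(x, y) ∈ p.edges →
        ∃ k : Fin m, CrucialAt w m k x y ∨ CrucialAt w m k y x := by
      intro x y hxy
      have hadj : G.Adj x y := (SimpleGraph.Walk.edges_subset_edgeSet p hxy)
      rw [hG, SimpleGraph.fromRel_adj] at hadj
      rcases hadj.2 with ⟨k, hk⟩ | ⟨k, hk⟩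
      · exact ⟨k, Or.inl hk⟩
      · exact ⟨k, Or.inr hk⟩
    set S : Finset (Fin m) :=
      Finset.univ.filter (fun k => ∃ x y : Fin m → Bool,
        s(x, y) ∈ p.edges ∧ (CrucialAt w m k x y ∨ CrucialAt w m k y x)) with hS
    have hSne : S.Nonempty := by
      obtain ⟨e, he⟩ := List.exists_mem_of_ne_nil _ hLne
      induction e using Sym2.inductionOn with
      | hf x y =>
        obtain ⟨k, hk⟩ := edge_idx x y he
        refine ⟨k, ?_⟩
        rw [hS, Finset.mem_filter]
        exact ⟨Finset.mem_univ _, x, y, he, hk⟩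
    set K : Fin m := S.max' hSne with hK
    have hKmem : K ∈ S := S.max'_mem hSne
    rw [hS, Finset.mem_filter] at hKmem
    obtain ⟨-, x₀, y₀, hxy₀, hcr₀⟩ := hKmem
    -- normalize the witness edge
    obtain ⟨u, v, he₀L, hcuv⟩ :
        ∃ u v : Fin m → Bool, s(u, v) ∈ p.edges ∧ CrucialAt w m K u v := by
      rcases hcr₀ with h | h
      · exact ⟨x₀, y₀, hxy₀, h⟩
      · exact ⟨y₀, x₀, by rwa [Sym2.eq_swap], h⟩
    set e₀ : Sym2 (Fin m → Bool) := s(u, v) with he₀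
    -- all indices used in the cycle are ≤ K
    have hle : ∀ x y : Fin m → Bool, ∀ k : Fin m, s(x, y) ∈ p.edges →
        (CrucialAt w m k x y ∨ CrucialAt w m k y x) → k ≤ K := by
      intro x y k hxy hk
      apply S.le_max' k
      rw [hS, Finset.mem_filter]
      exact ⟨Finset.mem_univ _, x, y, hxy, hk⟩
    -- coordinates above K are constant along the cycle
    have habove : ∀ i : Fin m, (K : ℕ) < (i : ℕ) →
        ∀ c ∈ p.support, c i = a i := by
      intro i hi
      apply walk_support_const (fun c => c i) p
      intro x y hxy
      obtain ⟨k, hk⟩ := edge_idx x y hxy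
      have hkK : k ≤ K := hle x y k hxy hk
      have hki : (k : ℕ) < (i : ℕ) := lt_of_le_of_lt hkK hi
      rcases hk with hk | hk
      · exact hk.2.2.2 i hki
      · exact (hk.2.2.2 i hki).symm
    -- any cycle edge crucial at index K equals e₀
    have hkey : ∀ x y : Fin m → Bool, s(x, y) ∈ p.edges →
        CrucialAt w m K x y → x = u ∧ y = v := by
      intro x y hxy hc
      have hxs : x ∈ p.support := SimpleGraph.Walk.fst_mem_support_of_mem_edges p hxy
      have hus : u ∈ p.support := SimpleGraph.Walk.fst_mem_support_of_mem_edges p he₀L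
      have hxu : x = u := by
        funext i
        rcases lt_trichotomy ((i : ℕ)) ((K : ℕ)) with h | h | h
        · rw [(hc.1 i h).1, (hcuv.1 i h).1]
        · have : i = K := Fin.ext h
          rw [this, hc.2.1, hcuv.2.1]
        · rw [habove i h x hxs, habove i h u hus]
      refine ⟨hxu, ?_⟩
      funext i
      rcases lt_trichotomy ((i : ℕ)) ((K : ℕ)) with h | h | h
      · rw [(hc.1 i h).2, (hcuv.1 i h).2]
      · have : i = K := Fin.ext h
        rw [this, hc.2.2.1, hcuv.2.2.1]
      · rw [← hc.2.2.2 i h, hxu, hcuv.2.2.2 i h]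
    -- hypotheses of the parity lemma
    have hne : ∀ x y : Fin m → Bool, s(x, y) = e₀ → x K ≠ y K := by
      intro x y hxy
      rw [he₀, Sym2.eq_iff] at hxy
      rcases hxy with ⟨rfl, rfl⟩ | ⟨rfl, rfl⟩
      · rw [hcuv.2.1, hcuv.2.2.1]; simp
      · rw [hcuv.2.1, hcuv.2.2.1]; simp
    have hedges : ∀ x y : Fin m → Bool, s(x, y) ∈ p.edges →
        s(x, y) = e₀ ∨ x K = y K := by
      intro x y hxy
      obtain ⟨k, hk⟩ := edge_idx x y hxy
      have hkK : k ≤ K := hle x y k hxy hk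
      rcases eq_or_lt_of_le hkK with heq | hlt
      · left
        rcases hk with h | h
        · obtain ⟨rfl, rfl⟩ := hkey x y hxy (heq ▸ h)
          rfl
        · obtain ⟨rfl, rfl⟩ := hkey y x (by rwa [Sym2.eq_swap]) (heq ▸ h)
          rw [Sym2.eq_swap]
      · right
        have hlt' : (k : ℕ) < (K : ℕ) := hlt
        rcases hk with h | h
        · exact h.2.2.2 K hlt'
        · exact (h.2.2.2 K hlt').symm
    have hpar := walk_count_parity (G := G) (fun c => c K) e₀ hne p hedges
    have : Even (p.edges.count e₀) := hpar.mp rfl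
    have hcount : p.edges.count e₀ = 1 :=
      List.count_eq_one_of_mem hp.edges_nodup he₀L
    rw [hcount] at this
    exact Nat.not_even_one this
end
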